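/- arXiv:2512.12077 — 5 statements merged into one kernel-verified Lean document; each statement's English description precedes it below -/
import Mathlib

section
/- For any fixed word s in {0,1}^n, the buffer sets satisfy B_0(s) = {ε}, and for all 1 ≤ t ≤ n, B_t(s) = { w ∘ s(t) : w ∈ B_{t-1}(s) } ∪ { tail(w) : w ∈ B_{t-1}(s), w(1) = s(t) }. -/
/-- The subword of `s` indexed by the positions where `c` is `true`,
in increasing order of index. -/
def subAt {α : Type*} (s : List α) (c : ℕ → Bool) : List α :=
  ((s.zipIdx.map Prod.swap).filter (fun p => c p.1)).map Prod.snd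

/-- `w` is a buffer for `s`: there is a partition `(A₁, A₂)` of the index set of `s`
(given by the indicator `c` of `A₁`) with `s(A₁) = s(A₂) ∘ w`. -/
def IsBufferOf {α : Type*} (w s : List α) : Prop :=
  ∃ c : ℕ → Bool, subAt s c = subAt s (fun i => !(c i)) ++ w

/-- `bufferSet s t` is the set `B_t(s)` of buffers of the prefix `s[1,t]`. -/
def bufferSet {α : Type*} (s : List α) (t : ℕ) : Set (List α) :=
  {w | IsBufferOf w (s.take t)}

/-- A shuffle square: a word that can be partitioned into two disjoint identical subwords. -/
def IsShuffleSquare {α : Type*} (s : List α) : Prop := IsBufferOf [] s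

/-!
A partition of the prefix `p ++ [a]` restricts to a partition of `p`. If the new letter goes to
`A₂`, the buffer loses its first letter, which must be `a`; if it goes to `A₁`, `a` is appended
to the buffer. Conversely either choice extends a partition of `p`. The one subtle case is a
letter sent to `A₁` that leaves an empty buffer: then `A₂(p) = A₁(p) ∘ a`, so exchanging the
roles of `A₁` and `A₂` shows that `a` is a buffer of `p` and the empty word is its tail.
-/

section Buffer

variable {α : Type*}

theorem subAt_congr {c c' : ℕ → Bool} (p : List α) (h : ∀ i < p.length, c i = c' i) :
    subAt p c = subAt p c' := by
  unfold subAt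
  congr 1
  apply List.filter_congr
  intro x hx
  obtain ⟨y, hy, rfl⟩ := List.mem_map.1 hx
  exact h y.2 (by simpa using List.snd_lt_of_mem_zipIdx hy)

theorem subAt_append_singleton (p : List α) (a : α) (c : ℕ → Bool) :
    subAt (p ++ [a]) c = subAt p c ++ if c p.length then [a] else [] := by
  unfold subAt
  rw [List.zipIdx_append, List.map_append, List.filter_append, List.map_append]
  by_cases h : c p.length <;> simp [h]

theorem subAt_append_singleton_update (p : List α) (a : α) (c : ℕ → Bool) (b : Bool) :
    subAt (p ++ [a]) (Function.update c p.length b) = subAt p c ++ if b then [a] else [] := by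
  rw [subAt_append_singleton, Function.update_self]
  congr 1
  exact subAt_congr p fun i hi => Function.update_of_ne hi.ne _ _

theorem not_update (c : ℕ → Bool) (n : ℕ) (b : Bool) :
    (fun i => !Function.update c n b i) = Function.update (fun i => !c i) n !b :=
  Function.comp_update not c n b

theorem isBufferOf_nil_iff {w : List α} : IsBufferOf w [] ↔ w = [] := by
  constructor
  · rintro ⟨c, h⟩
    simpa [subAt] using h.symm
  · rintro rfl
    exact ⟨fun _ => true, rfl⟩

theorem IsBufferOf.append_singleton {w p : List α} (h : IsBufferOf w p) (a : α) :
    IsBufferOf (w ++ [a]) (p ++ [a]) := by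
  obtain ⟨c, hc⟩ := h
  refine ⟨Function.update c p.length true, ?_⟩
  rw [not_update, subAt_append_singleton_update, subAt_append_singleton_update, hc]
  simp

theorem IsBufferOf.of_cons {a : α} {w p : List α} (h : IsBufferOf (a :: w) p) :
    IsBufferOf w (p ++ [a]) := by
  obtain ⟨c, hc⟩ := h
  refine ⟨Function.update c p.length false, ?_⟩
  rw [not_update, subAt_append_singleton_update, subAt_append_singleton_update, hc]
  simp

theorem IsBufferOf.of_append_singleton {v p : List α} {a : α} (h : IsBufferOf v (p ++ [a])) :
    (∃ w, IsBufferOf w p ∧ v = w ++ [a]) ∨ IsBufferOf (a :: v) p := by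
  obtain ⟨c, hc⟩ := h
  rw [subAt_append_singleton, subAt_append_singleton] at hc
  cases hlast : c p.length
  · simp only [hlast, Bool.not_false, if_true, Bool.false_eq_true, if_false,
      List.append_nil, List.append_assoc, List.singleton_append] at hc
    exact Or.inr ⟨c, hc⟩
  · simp only [hlast, Bool.not_true, if_true, Bool.false_eq_true, if_false,
      List.append_nil] at hc
    rcases v.eq_nil_or_concat' with rfl | ⟨w, b, rfl⟩
    · refine Or.inr ⟨fun i => !c i, ?_⟩
      simpa using hc.symm
    · rw [← List.append_assoc] at hc
      obtain ⟨hw, hab⟩ := List.append_inj' hc rfl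
      obtain rfl : a = b := List.singleton_inj.1 hab
      exact Or.inl ⟨w, ⟨c, hw⟩, rfl⟩

theorem isBufferOf_append_singleton_iff {v p : List α} {a : α} :
    IsBufferOf v (p ++ [a]) ↔
      (∃ w, IsBufferOf w p ∧ v = w ++ [a]) ∨
        ∃ w, IsBufferOf w p ∧ w.head? = some a ∧ v = w.tail := by
  constructor
  · intro h
    exact h.of_append_singleton.imp id fun hcons => ⟨a :: v, hcons, rfl, rfl⟩
  · rintro (⟨w, hw, rfl⟩ | ⟨_ | ⟨b, w⟩, hw, hhead, rfl⟩)
    · exact hw.append_singleton a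
    · simp at hhead
    · obtain rfl := Option.some_inj.1 hhead
      exact hw.of_cons

end Buffer

/-- `B_0(s) = {ε}` and for `1 ≤ t ≤ n`,
`B_t(s) = {w ∘ s(t) : w ∈ B_{t-1}(s)} ∪ {tail(w) : w ∈ B_{t-1}(s), w(1) = s(t)}`. -/
theorem buffer_set_recursion (n : ℕ) (s : List Bool) (hs : s.length = n) :
    bufferSet s 0 = {([] : List Bool)} ∧
    ∀ t : ℕ, 1 ≤ t → t ≤ n →
      bufferSet s t =
        {v | ∃ w ∈ bufferSet s (t - 1), v = w ++ [s.getD (t - 1) false]} ∪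
        {v | ∃ w ∈ bufferSet s (t - 1),
          w.head? = some (s.getD (t - 1) false) ∧ v = w.tail} := by
  refine ⟨Set.ext fun w => by simp [bufferSet, isBufferOf_nil_iff], fun t ht1 htn => ?_⟩
  obtain ⟨t, rfl⟩ := Nat.exists_eq_add_of_le' ht1
  have ht : t < s.length := by omega
  have htake : s.take (t + 1) = s.take t ++ [s.getD t false] := by
    rw [List.getD_eq_getElem _ _ ht, List.take_succ_eq_append_getElem ht]
  ext v
  simp only [bufferSet, Nat.add_sub_cancel, htake, Set.mem_ofPred_eq, Set.mem_union,
    isBufferOf_append_singleton_iff]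
end

section
/- For every binary word s and every t ≥ 0, the greedy buffer greedy_t(s) has at most two runs, i.e., greedy_t(s) ∈ Σ_2 = {0^a 1^b, 1^a 0^b : a, b ≥ 0}. Moreover |greedy_t(s)| ≡ t (mod 2). -/
/-- One step of the greedy algorithm: shorten the buffer whenever possible. -/
def greedyStep (w : List Bool) (b : Bool) : List Bool :=
  if w.head? = some b then w.tail else w ++ [b]

/-- The greedy algorithm buffer `greedy(s)`. -/
def greedy (s : List Bool) : List Bool := s.foldl greedyStep []
/-- Binary words with at most two runs: `0^a 1^b` or `1^a 0^b`. -/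
def Sigma2 : Set (List Bool) :=
  {w | ∃ a b : ℕ, w = List.replicate a false ++ List.replicate b true ∨
      w = List.replicate a true ++ List.replicate b false}

/-! Greedy only ever removes the first letter or appends a letter different from the first
one, so a word `x^a (¬x)^b` stays of this shape; each step changes the length by one. -/

open List

lemma mem_sigma2_iff {w : List Bool} :
    w ∈ Sigma2 ↔ ∃ (x : Bool) (a b : ℕ), w = replicate a x ++ replicate b !x := by
  constructor
  · rintro ⟨a, b, rfl | rfl⟩
    exacts [⟨false, a, b, rfl⟩, ⟨true, a, b, rfl⟩]
  · rintro ⟨x, a, b, rfl⟩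
    cases x
    exacts [⟨a, b, Or.inl rfl⟩, ⟨a, b, Or.inr rfl⟩]

lemma nil_mem_sigma2 : [] ∈ Sigma2 := ⟨0, 0, Or.inl rfl⟩

lemma tail_mem_sigma2 {w : List Bool} (h : w ∈ Sigma2) : w.tail ∈ Sigma2 := by
  obtain ⟨x, a, b, rfl⟩ := mem_sigma2_iff.mp h
  refine mem_sigma2_iff.mpr ?_
  cases a with
  | zero => exact ⟨x, 0, b - 1, by simp [tail_replicate]⟩
  | succ a => exact ⟨x, a, b, by simp [replicate_succ]⟩

lemma concat_mem_sigma2 {w : List Bool} {c : Bool} (h : w ∈ Sigma2)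
    (hc : w.head? ≠ some c) : w ++ [c] ∈ Sigma2 := by
  obtain ⟨x, a, b, rfl⟩ := mem_sigma2_iff.mp h
  refine mem_sigma2_iff.mpr ?_
  by_cases hcx : c = x
  · subst hcx
    obtain rfl : a = 0 := by
      by_contra ha
      obtain ⟨a, rfl⟩ := Nat.exists_eq_succ_of_ne_zero ha
      simp [replicate_succ] at hc
    exact ⟨!c, b, 1, by simp⟩
  · obtain rfl : c = !x := by cases c <;> cases x <;> simp_all
    exact ⟨x, a, b + 1, by simp [replicate_succ']⟩

lemma greedyStep_mem_sigma2 {w : List Bool} (h : w ∈ Sigma2) (c : Bool) :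
    greedyStep w c ∈ Sigma2 := by
  unfold greedyStep
  split_ifs with hc
  exacts [tail_mem_sigma2 h, concat_mem_sigma2 h hc]

lemma length_greedyStep_mod_two (w : List Bool) (c : Bool) :
    (greedyStep w c).length % 2 = (w.length + 1) % 2 := by
  unfold greedyStep
  split_ifs with hc
  · have hw : w ≠ [] := by rintro rfl; simp at hc
    have := length_pos_iff.mpr hw
    simp only [length_tail]
    omega
  · simp

lemma greedy_concat (u : List Bool) (c : Bool) :
    greedy (u ++ [c]) = greedyStep (greedy u) c :=
  foldl_concat _ _ _ _

lemma greedy_mem_sigma2 (s : List Bool) : greedy s ∈ Sigma2 := by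
  induction s using reverseRecOn with
  | nil => exact nil_mem_sigma2
  | append_singleton u c ih => rw [greedy_concat]; exact greedyStep_mem_sigma2 ih c

lemma length_greedy_mod_two (s : List Bool) : (greedy s).length % 2 = s.length % 2 := by
  induction s using reverseRecOn with
  | nil => rfl
  | append_singleton u c ih =>
    rw [greedy_concat, length_greedyStep_mod_two, length_append, length_singleton]
    omega

/-- for every binary word `s` and every `t`, `greedy_t(s) ∈ Σ₂`,
and `|greedy_t(s)| ≡ t (mod 2)`. -/
theorem greedy_mem_sigma2_and_parity (s : List Bool) (t : ℕ) (ht : t ≤ s.length) :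
    greedy (s.take t) ∈ Sigma2 ∧ (greedy (s.take t)).length % 2 = t % 2 := by
  refine ⟨greedy_mem_sigma2 _, ?_⟩
  rw [length_greedy_mod_two, length_take_of_le ht]
end

section
/- If s ∈ {0,1}^ω is a sequence of i.i.d. uniform random bits, then the process (|greedy_t(s)|)_{t≥0} is a simple random walk on ℕ with a reflective barrier at 0: |greedy_{t+1}(s)| = |greedy_t(s)| ± 1, each with probability 1/2 when |greedy_t(s)| > 0, and |greedy_{t+1}(s)| = 1 with probability 1 when |greedy_t(s)| = 0. -/
open MeasureTheory

lemma greedy_append (u : List Bool) (b : Bool) :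
    greedy (u ++ [b]) = greedyStep (greedy u) b := by
  simp [greedy, List.foldl_append]

lemma half_measure (h : Bool) :
    (PMF.uniformOfFintype Bool).toMeasure {h} = 1 / 2 := by
  rw [PMF.toMeasure_apply_singleton _ _ (measurableSet_singleton h)]
  simp [PMF.uniformOfFintype_apply]

/-- `(|greedy_t(s)|)_t` is a simple random walk on ℕ reflected at 0:
for any deterministic history `u` (so that the next bit is uniform and independent
of the past), if the current buffer is nonempty then the length goes up by one with
probability 1/2 and down by one with probability 1/2; if it is empty, the length
becomes 1 with probability 1. -/
theorem greedy_length_random_walk (u : List Bool) :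
    (greedy u = [] →
      (PMF.uniformOfFintype Bool).toMeasure
        {b : Bool | (greedy (u ++ [b])).length = 1} = 1) ∧
    (greedy u ≠ [] →
      (PMF.uniformOfFintype Bool).toMeasure
        {b : Bool | (greedy (u ++ [b])).length = (greedy u).length + 1} = 1 / 2 ∧
      (PMF.uniformOfFintype Bool).toMeasure
        {b : Bool | (greedy (u ++ [b])).length + 1 = (greedy u).length} = 1 / 2) := by
  constructor
  · intro h
    have : {b : Bool | (greedy (u ++ [b])).length = 1} = Set.univ := by
      ext b; simp [greedy_append, greedyStep, h]
    rw [this, measure_univ]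
  · intro h
    obtain ⟨a, w, hw⟩ := List.exists_cons_of_ne_nil h
    constructor
    · have : {b : Bool | (greedy (u ++ [b])).length = (greedy u).length + 1} = {!a} := by
        ext b
        simp only [Set.mem_setOf_eq, greedy_append, greedyStep, hw, Set.mem_singleton_iff]
        cases b <;> cases a <;> simp <;> omega
      rw [this, half_measure]
    · have : {b : Bool | (greedy (u ++ [b])).length + 1 = (greedy u).length} = {a} := by
        ext b
        simp only [Set.mem_setOf_eq, greedy_append, greedyStep, hw, Set.mem_singleton_iff]
        cases b <;> cases a <;> simp <;> omega
      rw [this, half_measure]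
end

section
/- For all t ≥ 0 and a, b ≥ 0, the greedy visit probabilities satisfy the monotonicity q_t(1^a) ≥ q_t(1 0^{a+1}) and q_t(1^{a+1} 0^{b+1}) ≥ q_t(1^{a+2} 0^b), where q_t(w) is the probability that the greedy buffer at time t equals w for a uniformly random input of length t. -/
/-- `q t w`: probability that the greedy buffer at time `t` equals `w`,
for a uniformly random binary word of length `t`. -/
noncomputable def q (t : ℕ) (w : List Bool) : ℝ :=
  ({f : Fin t → Bool | greedy (List.ofFn f) = w}.ncard : ℝ) / 2 ^ t

/-!
Let `N_t(w)` be the number of inputs of length `t` with greedy buffer `w`. Splitting off the last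
input bit gives `N_{t+1}(w) = N_t(1w) + N_t(0w) + N_t(u)`, the last term present only when
`w = u c` with `u` not starting with `c`. Greedy buffers never contain a subsequence `b (!b) b`,
and complementing all bits is a symmetry, so on the words `1^i 0^j` this becomes a closed
recurrence, along which both inequalities propagate by a simultaneous induction on `t`.
-/

open Finset List

def greedyCount (t : ℕ) (w : List Bool) : ℕ := #{f : Fin t → Bool | greedy (List.ofFn f) = w}

theorem q_le_q_iff {t : ℕ} {v w : List Bool} :
    q t v ≤ q t w ↔ greedyCount t v ≤ greedyCount t w := by
  have (u : List Bool) : q t u = greedyCount t u / 2 ^ t := by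
    rw [q, greedyCount, ← Set.ncard_coe_finset, coe_filter]
    simp
  rw [this, this, div_le_div_iff_of_pos_right (by positivity), Nat.cast_le]

theorem greedy_append_singleton (s : List Bool) (b : Bool) :
    greedy (s ++ [b]) = greedyStep (greedy s) b :=
  foldl_concat ..

theorem greedyStep_eq_iff {v w : List Bool} {b : Bool} :
    greedyStep v b = w ↔ v = b :: w ∨ v ++ [b] = w ∧ v.head? ≠ some b := by
  unfold greedyStep
  cases v with
  | nil => simp [eq_comm]
  | cons x v =>
    by_cases h : x = b
    · subst h; simp [eq_comm]
    · simp [Ne.symm h, eq_comm]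

theorem greedyCount_succ (t : ℕ) (w : List Bool) :
    greedyCount (t + 1) w = ∑ b, #{g : Fin t → Bool | greedyStep (greedy (ofFn g)) b = w} := by
  simp only [greedyCount, card_filter]
  rw [← (Fin.snocEquiv fun _ => Bool).sum_comp, Fintype.sum_prod_type]
  simp only [Fin.snocEquiv_apply, ofFn_succ', Fin.snoc_castSucc, Fin.snoc_last,
    concat_eq_append, greedy_append_singleton]

theorem card_greedyStep_eq (t : ℕ) (b : Bool) (w : List Bool) :
    #{g : Fin t → Bool | greedyStep (greedy (ofFn g)) b = w}
      = greedyCount t (b :: w)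
        + #{g : Fin t → Bool |
            greedy (ofFn g) ++ [b] = w ∧ (greedy (ofFn g)).head? ≠ some b} := by
  simp only [greedyStep_eq_iff, filter_or, greedyCount]
  refine card_union_of_disjoint (disjoint_filter.2 fun g _ h₁ h₂ => ?_)
  have := congrArg length (h₁ ▸ h₂.1)
  simp at this
  omega

theorem card_greedy_append_singleton_eq (t : ℕ) (b c : Bool) (u : List Bool) :
    #{g : Fin t → Bool | greedy (ofFn g) ++ [b] = u ++ [c] ∧ (greedy (ofFn g)).head? ≠ some b}
      = if b = c ∧ u.head? ≠ some b then greedyCount t u else 0 := by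
  simp only [append_singleton_inj]
  split_ifs with h
  · obtain ⟨rfl, hu⟩ := h
    exact congrArg card (filter_congr fun g _ => by grind)
  · rw [card_eq_zero, filter_eq_empty_iff]
    rintro g - ⟨⟨rfl, rfl⟩, hu⟩
    exact h ⟨rfl, hu⟩

theorem greedyCount_succ_nil (t : ℕ) :
    greedyCount (t + 1) [] = greedyCount t [true] + greedyCount t [false] := by
  simp [greedyCount_succ, card_greedyStep_eq]

theorem greedyCount_succ_append_singleton (t : ℕ) (u : List Bool) (c : Bool) :
    greedyCount (t + 1) (u ++ [c])
      = greedyCount t (true :: (u ++ [c])) + greedyCount t (false :: (u ++ [c]))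
        + if u.head? = some c then 0 else greedyCount t u := by
  simp only [greedyCount_succ, Fintype.sum_bool, card_greedyStep_eq,
    card_greedy_append_singleton_eq]
  cases c <;> split_ifs <;> simp_all <;> omega

theorem greedyCount_zero_of_ne_nil {w : List Bool} (hw : w ≠ []) : greedyCount 0 w = 0 := by
  rw [greedyCount, card_eq_zero, filter_eq_empty_iff]
  exact fun f _ hf => hw (by simpa [greedy] using hf.symm)

theorem greedyStep_map_not (w : List Bool) (b : Bool) :
    greedyStep (w.map not) (!b) = (greedyStep w b).map not := by
  cases w <;> simp [greedyStep, apply_ite (map not)]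

theorem greedy_map_not (s : List Bool) : greedy (s.map not) = (greedy s).map not := by
  rw [greedy, greedy, foldl_map]
  exact foldl_hom (map not) (init := []) greedyStep_map_not

theorem greedyCount_map_not (t : ℕ) (w : List Bool) :
    greedyCount t (w.map not) = greedyCount t w := by
  refine card_equiv (Equiv.piCongrRight fun _ => Bool.involutive_not.toPerm) fun f => ?_
  have hf : ofFn (Equiv.piCongrRight (fun _ => Bool.involutive_not.toPerm) f)
      = (ofFn f).map not := by rw [map_ofFn]; rfl
  simp only [Finset.mem_filter, mem_univ, true_and, hf, greedy_map_not]
  exact Bool.involutive_not.list_map.eq_iff.symm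

/-- Greedy buffers have the form `c^i (!c)^j`, i.e. contain no subsequence `b (!b) b`. -/
def NoZigzag (w : List Bool) : Prop := ∀ b, ¬ [b, !b, b] <+ w

theorem NoZigzag.greedyStep {w : List Bool} (hw : NoZigzag w) (b : Bool) :
    NoZigzag (greedyStep w b) := by
  unfold _root_.greedyStep
  split_ifs with h
  · exact fun c hc => hw c (hc.trans w.tail_sublist)
  · intro c hc
    obtain ⟨l, l', hl, hlw, hl'⟩ := sublist_append_iff.1 hc
    rcases sublist_singleton.1 hl' with rfl | rfl
    · exact hw c (by rwa [hl, append_nil])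
    · have hl : l ++ [b] = [c, !c] ++ [c] := hl.symm
      obtain ⟨rfl, rfl⟩ := append_singleton_inj.1 hl
      obtain ⟨x, w', rfl⟩ := exists_cons_of_ne_nil (l := w) (by rintro rfl; simp at hlw)
      obtain rfl : x = !b := by cases x <;> cases b <;> simp_all
      have hw' : [b, !b] <+ w' := by
        rcases sublist_cons_iff.1 hlw with h' | ⟨r, hr, -⟩
        · exact h'
        · simp at hr
      exact hw (!b) (by simpa using hw'.cons_cons (!b))

theorem noZigzag_greedy (s : List Bool) : NoZigzag (greedy s) := by
  induction s using reverseRecOn with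
  | nil => simp [NoZigzag, greedy]
  | append_singleton s b ih => rw [greedy_append_singleton]; exact ih.greedyStep b

theorem greedyCount_eq_zero_of_sublist (t : ℕ) {w : List Bool} {b : Bool} (h : [b, !b, b] <+ w) :
    greedyCount t w = 0 := by
  rw [greedyCount, card_eq_zero, filter_eq_empty_iff]
  exact fun f _ hf => noZigzag_greedy (ofFn f) b (hf ▸ h)

def onesZeros (i j : ℕ) : List Bool := replicate i true ++ replicate j false

theorem true_cons_onesZeros (i j : ℕ) : true :: onesZeros i j = onesZeros (i + 1) j := rfl

theorem onesZeros_succ_right (i j : ℕ) : onesZeros i (j + 1) = onesZeros i j ++ [false] := by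
  simp [onesZeros, replicate_succ']

theorem onesZeros_succ_zero (i : ℕ) : onesZeros (i + 1) 0 = onesZeros i 0 ++ [true] := by
  simp [onesZeros, replicate_succ']

theorem head?_onesZeros_succ (i j : ℕ) : (onesZeros (i + 1) j).head? = some true := rfl

theorem greedyCount_false_cons_onesZeros_succ_succ (t i j : ℕ) :
    greedyCount t (false :: onesZeros (i + 1) (j + 1)) = 0 :=
  greedyCount_eq_zero_of_sublist t (b := false) (by simp [onesZeros, replicate_succ])

theorem greedyCount_false_cons_onesZeros_zero (t i : ℕ) :
    greedyCount t (false :: onesZeros i 0) = greedyCount t (onesZeros 1 i) := by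
  rw [← greedyCount_map_not]
  simp [onesZeros]

theorem greedyCount_succ_onesZeros_succ_succ (t i j : ℕ) :
    greedyCount (t + 1) (onesZeros (i + 1) (j + 1))
      = greedyCount t (onesZeros (i + 2) (j + 1)) + greedyCount t (onesZeros (i + 1) j) := by
  rw [onesZeros_succ_right, greedyCount_succ_append_singleton, ← onesZeros_succ_right,
    true_cons_onesZeros, greedyCount_false_cons_onesZeros_succ_succ, head?_onesZeros_succ]
  simp

theorem greedyCount_succ_onesZeros_succ_zero (t i : ℕ) :
    greedyCount (t + 1) (onesZeros (i + 1) 0)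
      = greedyCount t (onesZeros (i + 2) 0) + greedyCount t (onesZeros 1 (i + 1))
        + if i = 0 then greedyCount t [] else 0 := by
  rw [onesZeros_succ_zero, greedyCount_succ_append_singleton, ← onesZeros_succ_zero,
    true_cons_onesZeros, greedyCount_false_cons_onesZeros_zero]
  cases i <;> simp [onesZeros, replicate_succ]

theorem greedyCount_succ_onesZeros_zero_zero (t : ℕ) :
    greedyCount (t + 1) (onesZeros 0 0)
      = greedyCount t (onesZeros 1 0) + greedyCount t (onesZeros 1 0) := by
  rw [show onesZeros 0 0 = [] from rfl, greedyCount_succ_nil, ← greedyCount_map_not t [false]]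
  rfl

theorem greedyCount_onesZeros_mono (t : ℕ) :
    (∀ a, greedyCount t (onesZeros 1 (a + 1)) ≤ greedyCount t (onesZeros a 0)) ∧
      ∀ a b, greedyCount t (onesZeros (a + 2) b)
        ≤ greedyCount t (onesZeros (a + 1) (b + 1)) := by
  induction t with
  | zero =>
    refine ⟨fun a => ?_, fun a b => ?_⟩ <;>
      rw [greedyCount_zero_of_ne_nil (by simp [onesZeros])] <;> exact Nat.zero_le _
  | succ t ih =>
    obtain ⟨ihA, ihB⟩ := ih
    have key (a : ℕ) :
        greedyCount t (onesZeros 2 (a + 1)) ≤ greedyCount t (onesZeros (a + 1) 0) :=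
      (ihB 0 (a + 1)).trans (ihA (a + 1))
    refine ⟨fun a => ?_, fun a b => ?_⟩
    · rcases a with _ | a
      · rw [greedyCount_succ_onesZeros_succ_succ, greedyCount_succ_onesZeros_zero_zero]
        exact add_le_add_left (key 0) _
      · rw [greedyCount_succ_onesZeros_succ_succ, greedyCount_succ_onesZeros_succ_zero]
        exact le_add_right (add_le_add_left (key (a + 1)) _)
    · rcases b with _ | b
      · rw [greedyCount_succ_onesZeros_succ_zero, greedyCount_succ_onesZeros_succ_succ,
          if_neg a.succ_ne_zero, add_zero]
        exact add_le_add (ihB (a + 1) 0) (ihA (a + 1))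
      · rw [greedyCount_succ_onesZeros_succ_succ, greedyCount_succ_onesZeros_succ_succ]
        exact add_le_add (ihB (a + 1) (b + 1)) (ihB a b)

/-- for all `t, a, b ≥ 0`, `q_t(1^a) ≥ q_t(1 0^{a+1})` and
`q_t(1^{a+1} 0^{b+1}) ≥ q_t(1^{a+2} 0^b)`. -/
theorem greedy_q_monotonicity (t a b : ℕ) :
    q t (true :: List.replicate (a + 1) false) ≤ q t (List.replicate a true) ∧
    q t (List.replicate (a + 2) true ++ List.replicate b false)
      ≤ q t (List.replicate (a + 1) true ++ List.replicate (b + 1) false) := by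
  obtain ⟨hA, hB⟩ := greedyCount_onesZeros_mono t
  exact ⟨q_le_q_iff.2 (by simpa [onesZeros] using hA a), q_le_q_iff.2 (hB a b)⟩
end

section
/- If almost every word s ∈ {0,1}^{2n} with even counts of both letters is a shuffle square (i.e., P[s ∈ S_2(n)] → 1 as n → ∞ over such words), then for almost all s ∈ {0,1}^n one has LT(s) ≥ ⌈n/2⌉ − 1, where LT(s) is the maximal semi-length of a shuffle-square subword of s. -/
/-- `LT(s)`: the maximal semi-length of a subword of `s` that is a shuffle square,
i.e. the largest `m` such that `s` contains two disjoint identical subwords of length `m`. -/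
noncomputable def twinSemiLength (s : List Bool) : ℕ :=
  sSup {m : ℕ | ∃ u : List Bool, u.Sublist s ∧ u.length = 2 * m ∧ IsShuffleSquare u}

inductive IsShuffle {α : Type*} : List α → List α → List α → Prop
  | nil : IsShuffle [] [] []
  | consLeft {a : α} {x y s : List α} : IsShuffle x y s → IsShuffle (a :: x) y (a :: s)
  | consRight {a : α} {x y s : List α} : IsShuffle x y s → IsShuffle x (a :: y) (a :: s)

namespace IsShuffle

variable {α : Type*} {x y s : List α}

theorem symm (h : IsShuffle x y s) : IsShuffle y x s := by
  induction h with
  | nil => exact nil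
  | consLeft _ ih => exact ih.consRight
  | consRight _ ih => exact ih.consLeft

theorem length_eq (h : IsShuffle x y s) : s.length = x.length + y.length := by
  induction h <;> grind

theorem count_eq [BEq α] (h : IsShuffle x y s) (a : α) : s.count a = x.count a + y.count a := by
  induction h <;> grind

theorem concat (h : IsShuffle x y s) (a : α) : IsShuffle (x ++ [a]) y (s ++ [a]) := by
  induction h with
  | nil => exact nil.consLeft
  | consLeft _ ih => exact ih.consLeft
  | consRight _ ih => exact ih.consRight

theorem reverse (h : IsShuffle x y s) : IsShuffle x.reverse y.reverse s.reverse := by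
  induction h with
  | nil => exact nil
  | @consLeft a _ _ _ _ ih => simpa using ih.concat a
  | @consRight a _ _ _ _ ih => simpa using (ih.symm.concat a).symm

theorem exists_sublist_of_cons_left {a : α} (h : IsShuffle (a :: x) y s) :
    ∃ u, u.Sublist s ∧ IsShuffle x y u := by
  induction s generalizing y with
  | nil => cases h
  | cons b t ih =>
    cases h with
    | consLeft h => exact ⟨t, List.sublist_cons_self _ t, h⟩
    | consRight h =>
      obtain ⟨u, hu, hs⟩ := ih h
      exact ⟨b :: u, hu.cons_cons b, hs.consRight⟩

theorem exists_sublist_tail {w t : List α} {a : α} (h : IsShuffle w w (a :: t)) :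
    ∃ u, u.Sublist t ∧ IsShuffle w.tail w.tail u := by
  cases h with
  | consLeft h =>
    obtain ⟨u, hu, hs⟩ := h.symm.exists_sublist_of_cons_left
    exact ⟨u, hu, hs.symm⟩
  | consRight h => exact h.exists_sublist_of_cons_left

end IsShuffle

theorem subAt_cons {α : Type*} (a : α) (s : List α) (c : ℕ → Bool) :
    subAt (a :: s) c = (if c 0 then [a] else []) ++ subAt s (fun i => c (i + 1)) := by
  rw [subAt, subAt, List.zipIdx_cons']
  cases h : c 0 <;> simp [List.filter_map, Function.comp_def, h]

theorem exists_subAt_iff_isShuffle {α : Type*} (s x y : List α) :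
    (∃ c, subAt s c = x ∧ subAt s (fun i => !c i) = y) ↔ IsShuffle x y s := by
  induction s generalizing x y with
  | nil =>
    constructor
    · rintro ⟨c, rfl, rfl⟩
      exact .nil
    · rintro ⟨⟩
      exact ⟨fun _ => true, rfl, rfl⟩
  | cons a t ih =>
    constructor
    · rintro ⟨c, rfl, rfl⟩
      rw [subAt_cons, subAt_cons]
      have hrest := (ih _ _).1 ⟨fun i => c (i + 1), rfl, rfl⟩
      cases c 0
      · simpa using hrest.consRight
      · simpa using hrest.consLeft
    · rintro (_ | h | h)
      · obtain ⟨c, rfl, rfl⟩ := (ih _ _).2 h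
        exact ⟨fun i => if i = 0 then true else c (i - 1), by simp [subAt_cons]⟩
      · obtain ⟨c, rfl, rfl⟩ := (ih _ _).2 h
        exact ⟨fun i => if i = 0 then false else c (i - 1), by simp [subAt_cons]⟩

theorem isShuffleSquare_iff {α : Type*} {s : List α} :
    IsShuffleSquare s ↔ ∃ w, IsShuffle w w s := by
  simp only [IsShuffleSquare, IsBufferOf, List.append_nil]
  constructor
  · rintro ⟨c, hc⟩
    exact ⟨_, (exists_subAt_iff_isShuffle s _ _).1 ⟨c, rfl, hc.symm⟩⟩
  · rintro ⟨w, hw⟩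
    obtain ⟨c, hx, hy⟩ := (exists_subAt_iff_isShuffle s w w).2 hw
    exact ⟨c, hx.trans hy.symm⟩

namespace IsShuffleSquare

variable {α : Type*}

theorem nil : IsShuffleSquare ([] : List α) :=
  isShuffleSquare_iff.2 ⟨[], .nil⟩

theorem even_count [BEq α] {s : List α} (h : IsShuffleSquare s) (a : α) : Even (s.count a) := by
  obtain ⟨w, hw⟩ := isShuffleSquare_iff.1 h
  exact ⟨_, hw.count_eq a⟩

theorem exists_sublist_of_concat {t : List α} {a : α} (h : IsShuffleSquare (t ++ [a])) :
    ∃ v, v.Sublist t ∧ IsShuffleSquare v ∧ v.length + 1 = t.length := by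
  obtain ⟨w, hw⟩ := isShuffleSquare_iff.1 h
  -- after reversal the deleted letter comes first, and its twin heads the other copy
  have hrev := hw.reverse
  rw [List.reverse_concat] at hrev
  obtain ⟨u, hu, hs⟩ := hrev.exists_sublist_tail
  refine ⟨u.reverse, by simpa using hu.reverse, isShuffleSquare_iff.2 ⟨_, hs.reverse⟩, ?_⟩
  have hlw := hw.length_eq
  have hlu := hs.length_eq
  simp only [List.length_append, List.length_tail, List.length_reverse, List.length_singleton]
    at hlw hlu ⊢
  omega

end IsShuffleSquare

theorem bddAbove_twinSemiLength_set (s : List Bool) :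
    BddAbove
      {m : ℕ | ∃ u : List Bool, u.Sublist s ∧ u.length = 2 * m ∧ IsShuffleSquare u} :=
  ⟨s.length, fun m ⟨u, hu, hl, _⟩ => by have := hu.length_le; omega⟩

theorem le_twinSemiLength {u s : List Bool} {m : ℕ} (hu : u.Sublist s) (hsq : IsShuffleSquare u)
    (hl : u.length = 2 * m) : m ≤ twinSemiLength s :=
  le_csSup (bddAbove_twinSemiLength_set s) ⟨u, hu, hl, hsq⟩

theorem exists_sublist_twinSemiLength (s : List Bool) :
    ∃ u, u.Sublist s ∧ u.length = 2 * twinSemiLength s ∧ IsShuffleSquare u :=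
  Nat.sSup_mem
    (s := {m | ∃ u : List Bool, u.Sublist s ∧ u.length = 2 * m ∧ IsShuffleSquare u})
    ⟨0, [], List.nil_sublist s, rfl, .nil⟩ (bddAbove_twinSemiLength_set s)

theorem twinSemiLength_le_twinSemiLength_dropLast_add_one (s : List Bool) :
    twinSemiLength s ≤ twinSemiLength s.dropLast + 1 := by
  rcases s.eq_nil_or_concat with rfl | ⟨t, a, rfl⟩
  · simp
  rw [List.concat_eq_append, List.dropLast_concat]
  obtain ⟨u, hu, hl, hsq⟩ := exists_sublist_twinSemiLength (t ++ [a])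
  obtain ⟨u₁, u₂, rfl, hu₁, hu₂⟩ := List.sublist_append_iff.1 hu
  rcases List.sublist_cons_iff.1 hu₂ with hnil | ⟨r, rfl, hr⟩
  · rw [List.sublist_nil.1 hnil, List.append_nil] at hl hsq
    have := le_twinSemiLength hu₁ hsq hl
    omega
  · rw [List.sublist_nil.1 hr] at hl hsq
    obtain ⟨v, hv, hvsq, hvl⟩ := hsq.exists_sublist_of_concat
    have := le_twinSemiLength (m := twinSemiLength (t ++ [a]) - 1) (hv.trans hu₁) hvsq
      (by simp only [List.length_append, List.length_singleton] at hl; omega)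
    omega

section Counting

variable {α : Type*}

theorem ncard_setOf_ofFn (n : ℕ) (P : List α → Prop) :
    {f : Fin n → α | P (List.ofFn f)}.ncard = {l : List α | l.length = n ∧ P l}.ncard := by
  rw [← Set.ncard_image_of_injective _ List.ofFn_injective]
  congr 1
  ext l
  constructor
  · rintro ⟨f, hf, rfl⟩
    exact ⟨List.length_ofFn, hf⟩
  · rintro ⟨rfl, hl⟩
    exact ⟨fun i => l[i], by simpa using hl, List.ofFn_getElem⟩

theorem ncard_length_eq [Finite α] (n : ℕ) :
    {l : List α | l.length = n}.ncard = Nat.card α ^ n := by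
  have := ncard_setOf_ofFn n (fun _ : List α => True)
  simp only [Set.ofPred_true, Set.ncard_univ, Nat.card_fun, Nat.card_eq_fintype_card,
    Fintype.card_fin, and_true] at this
  exact this.symm

theorem ncard_length_succ_le [Finite α] {m : ℕ} {P Q : List α → Prop}
    (hQP : ∀ l, Q l → P l.dropLast) :
    {l : List α | l.length = m + 1 ∧ Q l}.ncard ≤
      Nat.card α * {l | l.length = m ∧ P l}.ncard := by
  have hfin : {l : List α | l.length = m ∧ P l}.Finite :=
    (List.finite_length_eq α m).subset fun _ h => h.1
  have hsub : {l : List α | l.length = m + 1 ∧ Q l} ⊆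
      (fun p : List α × α => p.1 ++ [p.2]) '' ({l | l.length = m ∧ P l} ×ˢ Set.univ) := by
    rintro l ⟨hl, hQ⟩
    rcases l.eq_nil_or_concat with rfl | ⟨g, a, rfl⟩
    · simp at hl
    exact ⟨(g, a), ⟨⟨by simpa using hl, by simpa using hQP _ hQ⟩, trivial⟩, by simp⟩
  calc _ ≤ _ := Set.ncard_le_ncard hsub ((hfin.prod Set.finite_univ).image _)
    _ ≤ _ := Set.ncard_image_le (hfin.prod Set.finite_univ)
    _ = _ := by rw [Set.ncard_prod, Set.ncard_univ, mul_comm]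

end Counting

theorem even_count_true_concat_iff (l : List Bool) (b : Bool) :
    Even ((l ++ [b]).count true) ↔ b = decide (Odd (l.count true)) := by
  cases b <;> simp [Nat.even_add_one]

theorem ncard_length_succ_even_count_true (m : ℕ) (P : List Bool → Prop) :
    {l : List Bool | l.length = m + 1 ∧ Even (l.count true) ∧ P l.dropLast}.ncard =
      {l | l.length = m ∧ P l}.ncard := by
  -- the inverse of `dropLast` appends the parity bit
  have hinj : (fun l : List Bool => l ++ [decide (Odd (l.count true))]).Injective :=
    fun l₁ l₂ h => by simpa using congrArg List.dropLast h
  rw [← Set.ncard_image_of_injective {l | l.length = m ∧ P l} hinj]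
  congr 1
  ext l
  constructor
  · rintro ⟨hl, he, hP⟩
    rcases l.eq_nil_or_concat with rfl | ⟨g, b, rfl⟩
    · simp at hl
    rw [List.concat_eq_append, even_count_true_concat_iff] at he
    exact ⟨g, ⟨by simpa using hl, by simpa using hP⟩, by simp [he]⟩
  · rintro ⟨g, ⟨hg, hP⟩, rfl⟩
    exact ⟨by simp [hg], (even_count_true_concat_iff g _).2 rfl, by simpa using hP⟩

theorem ncard_even_counts (m : ℕ) :
    {l : List Bool | l.length = 2 * m + 2 ∧ Even (l.count true) ∧ Even (l.count false)}.ncard =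
      2 ^ (2 * m + 1) := by
  calc _ = {l : List Bool | l.length = 2 * m + 1 + 1 ∧ Even (l.count true) ∧ True}.ncard := by
        congr 1
        ext l
        simp only [Set.mem_ofPred_eq, and_true, and_congr_right_iff]
        intro hl
        have hsum : Even (l.count true + l.count false) := by
          rw [List.count_true_add_count_false, hl]
          exact ⟨m + 1, by omega⟩
        exact and_iff_left_of_imp (Nat.even_add.1 hsum).1
    _ = {l : List Bool | l.length = 2 * m + 1 ∧ True}.ncard :=
        ncard_length_succ_even_count_true _ fun _ => True
    _ = 2 ^ (2 * m + 1) := by simp [ncard_length_eq]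

theorem ncard_isShuffleSquare_le (m : ℕ) :
    {l : List Bool | l.length = 2 * m + 2 ∧ IsShuffleSquare l}.ncard ≤
      {l : List Bool | l.length = 2 * m + 1 ∧ m ≤ twinSemiLength l}.ncard := by
  refine le_of_le_of_eq ?_ (ncard_length_succ_even_count_true _ fun l => m ≤ twinSemiLength l)
  refine Set.ncard_le_ncard ?_ ((List.finite_length_eq Bool _).subset fun _ h => h.1)
  rintro l ⟨hl, hsq⟩
  have hle := le_twinSemiLength (List.Sublist.refl l) hsq (m := m + 1) (by omega)
  have hdrop := twinSemiLength_le_twinSemiLength_dropLast_add_one l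
  exact ⟨hl, hsq.even_count true, by omega⟩

theorem ncard_le_twinSemiLength_succ_le (k m : ℕ) :
    {l : List Bool | l.length = k + 1 ∧ m ≤ twinSemiLength l}.ncard ≤
      2 * {l : List Bool | l.length = k ∧ m - 1 ≤ twinSemiLength l}.ncard := by
  simpa using ncard_length_succ_le fun l (hl : m ≤ twinSemiLength l) => by
    have := twinSemiLength_le_twinSemiLength_dropLast_add_one l
    omega

theorem ncard_isShuffleSquare_div_le (N : ℕ) :
    ({l : List Bool | l.length = 2 * (N / 2 + 1) ∧ IsShuffleSquare l}.ncard : ℝ) /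
      {l : List Bool | l.length = 2 * (N / 2 + 1) ∧
        Even (l.count true) ∧ Even (l.count false)}.ncard ≤
    ({l : List Bool | l.length = N ∧ (N + 1) / 2 - 1 ≤ twinSemiLength l}.ncard : ℝ) /
      2 ^ N := by
  obtain ⟨m, rfl | rfl⟩ := Nat.even_or_odd' N
  · rw [show 2 * (2 * m / 2 + 1) = 2 * m + 2 by omega, show (2 * m + 1) / 2 - 1 = m - 1 by omega,
      ncard_even_counts, Nat.cast_pow, Nat.cast_two,
      div_le_div_iff₀ (by positivity) (by positivity), pow_succ]
    have hcard : ({l : List Bool | l.length = 2 * m + 2 ∧ IsShuffleSquare l}.ncard : ℝ) ≤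
        2 * {l : List Bool | l.length = 2 * m ∧ m - 1 ≤ twinSemiLength l}.ncard := by
      exact_mod_cast (ncard_isShuffleSquare_le m).trans (ncard_le_twinSemiLength_succ_le _ _)
    nlinarith [pow_pos (two_pos : (0 : ℝ) < 2) (2 * m)]
  · rw [show 2 * ((2 * m + 1) / 2 + 1) = 2 * m + 2 by omega,
      show (2 * m + 1 + 1) / 2 - 1 = m by omega, ncard_even_counts, Nat.cast_pow, Nat.cast_two]
    exact div_le_div_of_nonneg_right (by exact_mod_cast ncard_isShuffleSquare_le m)
      (by positivity)

/-- if almost every word in `{0,1}^{2n}` with even counts of both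
letters is a shuffle square, then for almost all `s ∈ {0,1}^n`,
`LT(s) ≥ ⌈n/2⌉ - 1`. -/
theorem twins_from_shuffle_squares
    (h : Filter.Tendsto
      (fun n : ℕ =>
        ({f : Fin (2 * n) → Bool | IsShuffleSquare (List.ofFn f)}.ncard : ℝ) /
        ({f : Fin (2 * n) → Bool |
            Even ((List.ofFn f).count true) ∧ Even ((List.ofFn f).count false)}.ncard : ℝ))
      Filter.atTop (nhds 1)) :
    Filter.Tendsto
      (fun n : ℕ =>
        ({f : Fin n → Bool |
            (n + 1) / 2 - 1 ≤ twinSemiLength (List.ofFn f)}.ncard : ℝ) / 2 ^ n)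
      Filter.atTop (nhds 1) := by
  have hhalf : Filter.Tendsto (fun N : ℕ => N / 2 + 1) Filter.atTop Filter.atTop :=
    Filter.tendsto_atTop_atTop.2 fun b => ⟨2 * b, fun N hN => by omega⟩
  refine tendsto_of_tendsto_of_tendsto_of_le_of_le (h.comp hhalf) tendsto_const_nhds
    (fun N => ?_) (fun N => ?_)
  · simp only [Function.comp_apply,
      ncard_setOf_ofFn (P := fun l => (N + 1) / 2 - 1 ≤ twinSemiLength l),
      ncard_setOf_ofFn (P := fun l : List Bool => Even (l.count true) ∧ Even (l.count false)),
      ncard_setOf_ofFn (P := IsShuffleSquare)]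
    exact ncard_isShuffleSquare_div_le N
  · rw [div_le_one (by positivity)]
    norm_cast
    exact Nat.cast_le.2 ((Set.ncard_le_card _).trans_eq (by simp))
end
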